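/- Let L > 0, Δt > 0 and N be a positive integer, and fix positive constants ρ, α, λ, μ, ρ₁, K, γ, b, ρ₃, δ, κ and a nonzero constant β. For n = 0,…,N let uⁿ, φⁿ, ψⁿ, wⁿ, ξⁿ, Φⁿ, ϑⁿ be C¹ functions on [0,L] vanishing at x=0 and x=L, satisfying for each n = 1,…,N the update rules uⁿ = uⁿ⁻¹ + Δt ξⁿ, φⁿ = φⁿ⁻¹ + Δt Φⁿ, wⁿ = wⁿ⁻¹ + Δt ϑⁿ, and set Ψⁿ = (ψⁿ − ψⁿ⁻¹)/Δt. Assume that for each n = 1,…,N the following identities hold, where (f,g) = ∫₀^L f g dx and ‖·‖ is the L²(0,L) norm: (a) (ρ/Δt)(ξⁿ−ξⁿ⁻¹, ξⁿ) + α(u_xⁿ, ξ_xⁿ) − λ(φⁿ−uⁿ, ξⁿ) + μ‖ξⁿ‖² = 0; (b) (ρ₁/Δt)(Φⁿ−Φⁿ⁻¹, Φⁿ) + K(φ_xⁿ+ψⁿ, Φ_xⁿ) + λ(φⁿ−uⁿ, Φⁿ) + γ‖Φⁿ‖² + β(ϑ_xⁿ, Φⁿ) = 0; (c) b(ψ_xⁿ,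 Ψ_xⁿ) + K(φ_xⁿ+ψⁿ, Ψⁿ) = 0; (d) (ρ₃/Δt)(ϑⁿ−ϑⁿ⁻¹, ϑⁿ) + δ(w_xⁿ, ϑ_xⁿ) + β(Φ_xⁿ, ϑⁿ) + κ‖ϑ_xⁿ‖² = 0. Define the discrete energy Eⁿ = (1/2)( ρ‖ξⁿ‖² + α‖u_xⁿ‖² + λ‖φⁿ−uⁿ‖² + ρ₁‖Φⁿ‖² + K‖φ_xⁿ+ψⁿ‖² + b‖ψ_xⁿ‖² + ρ₃‖ϑⁿ‖² + δ‖w_xⁿ‖² ). Then Eⁿ ≤ Eⁿ⁻¹ for all n = 1,…,N. -/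

import Mathlib

/-!
Test each equation with the discrete velocity and add the four identities. Through the update
rules the λ- and K-couplings recombine into backward differences of `‖φ - u‖²` and
`‖φ_x + ψ‖²`, and the two β-terms cancel after an integration by parts since `Φⁿ` vanishes at the
ends. Every backward difference obeys `2 (fⁿ - fⁿ⁻¹, fⁿ) ≥ ‖fⁿ‖² - ‖fⁿ⁻¹‖²`, so
`Eⁿ - Eⁿ⁻¹ ≤ -Δt (μ ‖ξⁿ‖² + γ ‖Φⁿ‖² + κ ‖ϑ_xⁿ‖²) ≤ 0`.
-/

open MeasureTheory Set

noncomputable section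

/-- The discrete energy of the fully discrete scheme. -/
def discEnergy (L ρ α lm ρ₁ K b ρ₃ δ : ℝ) (u φ ψ w ξ Φ ϑ : ℕ → ℝ → ℝ) (n : ℕ) : ℝ :=
  (1/2) * (ρ * (∫ x in (0:ℝ)..L, (ξ n x)^2)
    + α * (∫ x in (0:ℝ)..L, (deriv (u n) x)^2)
    + lm * (∫ x in (0:ℝ)..L, (φ n x - u n x)^2)
    + ρ₁ * (∫ x in (0:ℝ)..L, (Φ n x)^2)
    + K * (∫ x in (0:ℝ)..L, (deriv (φ n) x + ψ n x)^2)
    + b * (∫ x in (0:ℝ)..L, (deriv (ψ n) x)^2)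
    + ρ₃ * (∫ x in (0:ℝ)..L, (ϑ n x)^2)
    + δ * (∫ x in (0:ℝ)..L, (deriv (w n) x)^2))

theorem deriv_eq_deriv_add_mul_deriv {c : ℝ} {f g h : ℝ → ℝ} (hg : Differentiable ℝ g)
    (hh : Differentiable ℝ h) (hfg : ∀ x, f x = g x + c * h x) (x : ℝ) :
    deriv f x = deriv g x + c * deriv h x := by
  rw [funext hfg, deriv_fun_add (hg x) ((hh x).const_mul c), deriv_const_mul c (hh x)]

namespace intervalIntegral

variable {a b c c₁ c₂ : ℝ} {f g h h₁ h₂ : ℝ → ℝ}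

/- Pointwise `f² - g² = 2 c f h - c² h² ≤ 2 c f h` when `g = f - c h`. -/
theorem integral_sq_sub_integral_sq_le_of_eq_add (hab : a ≤ b) (hf : Continuous f)
    (hh : Continuous h) (hfg : ∀ x, f x = g x + c * h x) :
    (∫ x in a..b, f x ^ 2) - ∫ x in a..b, g x ^ 2 ≤ 2 * c * ∫ x in a..b, f x * h x := by
  have hg : Continuous g := by
    rw [show g = fun x => f x - c * h x from funext fun x => by rw [hfg x]; ring]
    fun_prop
  rw [← integral_sub ((by fun_prop : Continuous fun x => f x ^ 2).intervalIntegrable _ _)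
    ((by fun_prop : Continuous fun x => g x ^ 2).intervalIntegrable _ _), ← integral_const_mul]
  refine integral_mono_on hab
    ((by fun_prop : Continuous fun x => f x ^ 2 - g x ^ 2).intervalIntegrable _ _)
    ((by fun_prop : Continuous fun x => 2 * c * (f x * h x)).intervalIntegrable _ _) fun x _ => ?_
  rw [hfg x]
  nlinarith [sq_nonneg (c * h x)]

theorem integral_sq_sub_integral_sq_le (hab : a ≤ b) (hf : Continuous f) (hg : Continuous g) :
    (∫ x in a..b, f x ^ 2) - ∫ x in a..b, g x ^ 2 ≤ 2 * ∫ x in a..b, (f x - g x) * f x := by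
  simpa only [mul_one, mul_comm (f _)] using
    integral_sq_sub_integral_sq_le_of_eq_add (c := 1) (g := g) (h := fun x => f x - g x) hab hf
      (hf.sub hg) fun x => by ring

theorem integral_sq_sub_integral_sq_le_of_eq_add_add (hab : a ≤ b) (hf : Continuous f)
    (hh₁ : Continuous h₁) (hh₂ : Continuous h₂) (hfg : ∀ x, f x = g x + c₁ * h₁ x + c₂ * h₂ x) :
    (∫ x in a..b, f x ^ 2) - ∫ x in a..b, g x ^ 2
      ≤ 2 * c₁ * (∫ x in a..b, f x * h₁ x) + 2 * c₂ * ∫ x in a..b, f x * h₂ x := by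
  have hle := integral_sq_sub_integral_sq_le_of_eq_add (c := 1)
    (h := fun x => c₁ * h₁ x + c₂ * h₂ x) hab hf (by fun_prop) fun x => by rw [hfg x]; ring
  have hsplit : ∫ x in a..b, f x * (c₁ * h₁ x + c₂ * h₂ x)
      = c₁ * (∫ x in a..b, f x * h₁ x) + c₂ * ∫ x in a..b, f x * h₂ x := by
    simp_rw [mul_add, mul_left_comm (f _)]
    rw [integral_add ((by fun_prop : Continuous fun x => c₁ * (f x * h₁ x)).intervalIntegrable _ _)
      ((by fun_prop : Continuous fun x => c₂ * (f x * h₂ x)).intervalIntegrable _ _),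
      integral_const_mul, integral_const_mul]
  linarith

theorem integral_deriv_sq_sub_integral_deriv_sq_le_of_eq_add (hab : a ≤ b)
    (hg : ContDiff ℝ 1 g) (hh : ContDiff ℝ 1 h) (hfg : ∀ x, f x = g x + c * h x) :
    (∫ x in a..b, deriv f x ^ 2) - ∫ x in a..b, deriv g x ^ 2
      ≤ 2 * c * ∫ x in a..b, deriv f x * deriv h x := by
  have hf' := deriv_eq_deriv_add_mul_deriv (hg.differentiable one_ne_zero)
    (hh.differentiable one_ne_zero) hfg
  have hg' := hg.continuous_deriv le_rfl
  have hh' := hh.continuous_deriv le_rfl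
  refine integral_sq_sub_integral_sq_le_of_eq_add hab ?_ hh' hf'
  rw [funext hf']
  fun_prop

theorem integral_deriv_mul_add_integral_deriv_mul_eq_zero (hf : ContDiff ℝ 1 f)
    (hg : ContDiff ℝ 1 g) (ha : g a = 0) (hb : g b = 0) :
    (∫ x in a..b, deriv f x * g x) + ∫ x in a..b, deriv g x * f x = 0 := by
  have hf' := hf.continuous_deriv le_rfl
  have hg' := hg.continuous_deriv le_rfl
  have hparts := integral_deriv_mul_eq_sub
    (fun x _ => ((hf.differentiable one_ne_zero) x).hasDerivAt)
    (fun x _ => ((hg.differentiable one_ne_zero) x).hasDerivAt)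
    (hf'.intervalIntegrable a b) (hg'.intervalIntegrable a b)
  rw [ha, hb, mul_zero, mul_zero, sub_zero,
    integral_add ((by fun_prop : Continuous fun x => deriv f x * g x).intervalIntegrable _ _)
      ((by fun_prop : Continuous fun x => f x * deriv g x).intervalIntegrable _ _)] at hparts
  simpa only [mul_comm (f _)] using hparts

end intervalIntegral

open intervalIntegral

theorem discrete_energy_decay_general
    {L Δt ρ α lm μ ρ₁ K γ b ρ₃ δ κ β : ℝ} {N : ℕ}
    (hL : 0 < L) (hΔt : 0 < Δt)
    (hρ : 0 < ρ) (hα : 0 < α) (hlm : 0 < lm) (hμ : 0 < μ)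
    (hρ₁ : 0 < ρ₁) (hK : 0 < K) (hγ : 0 < γ) (hbb : 0 < b) (hρ₃ : 0 < ρ₃)
    (hδ : 0 < δ) (hκ : 0 < κ)
    (u φ ψ w ξ Φ ϑ : ℕ → ℝ → ℝ)
    (hreg : ∀ n ≤ N, ContDiff ℝ 1 (u n) ∧ ContDiff ℝ 1 (φ n) ∧ ContDiff ℝ 1 (ψ n)
      ∧ ContDiff ℝ 1 (w n) ∧ ContDiff ℝ 1 (ξ n) ∧ ContDiff ℝ 1 (Φ n)
      ∧ ContDiff ℝ 1 (ϑ n))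
    (hbc : ∀ n ≤ N,
      u n 0 = 0 ∧ u n L = 0 ∧ φ n 0 = 0 ∧ φ n L = 0 ∧ ψ n 0 = 0 ∧ ψ n L = 0 ∧
      w n 0 = 0 ∧ w n L = 0 ∧ ξ n 0 = 0 ∧ ξ n L = 0 ∧ Φ n 0 = 0 ∧ Φ n L = 0 ∧
      ϑ n 0 = 0 ∧ ϑ n L = 0)
    (hup : ∀ n : ℕ, 1 ≤ n → n ≤ N → ∀ x : ℝ,
      u n x = u (n-1) x + Δt * ξ n x ∧
      φ n x = φ (n-1) x + Δt * Φ n x ∧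
      w n x = w (n-1) x + Δt * ϑ n x)
    (hA : ∀ n : ℕ, 1 ≤ n → n ≤ N →
      ρ / Δt * (∫ x in (0:ℝ)..L, (ξ n x - ξ (n-1) x) * ξ n x)
        + α * (∫ x in (0:ℝ)..L, deriv (u n) x * deriv (ξ n) x)
        - lm * (∫ x in (0:ℝ)..L, (φ n x - u n x) * ξ n x)
        + μ * (∫ x in (0:ℝ)..L, (ξ n x)^2) = 0)
    (hB : ∀ n : ℕ, 1 ≤ n → n ≤ N →
      ρ₁ / Δt * (∫ x in (0:ℝ)..L, (Φ n x - Φ (n-1) x) * Φ n x)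
        + K * (∫ x in (0:ℝ)..L, (deriv (φ n) x + ψ n x) * deriv (Φ n) x)
        + lm * (∫ x in (0:ℝ)..L, (φ n x - u n x) * Φ n x)
        + γ * (∫ x in (0:ℝ)..L, (Φ n x)^2)
        + β * (∫ x in (0:ℝ)..L, deriv (ϑ n) x * Φ n x) = 0)
    (hC : ∀ n : ℕ, 1 ≤ n → n ≤ N →
      b * (∫ x in (0:ℝ)..L,
            deriv (ψ n) x * deriv (fun y => (ψ n y - ψ (n-1) y) / Δt) x)
        + K * (∫ x in (0:ℝ)..L,
            (deriv (φ n) x + ψ n x) * ((ψ n x - ψ (n-1) x) / Δt)) = 0)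
    (hD : ∀ n : ℕ, 1 ≤ n → n ≤ N →
      ρ₃ / Δt * (∫ x in (0:ℝ)..L, (ϑ n x - ϑ (n-1) x) * ϑ n x)
        + δ * (∫ x in (0:ℝ)..L, deriv (w n) x * deriv (ϑ n) x)
        + β * (∫ x in (0:ℝ)..L, deriv (Φ n) x * ϑ n x)
        + κ * (∫ x in (0:ℝ)..L, (deriv (ϑ n) x)^2) = 0) :
    ∀ n : ℕ, 1 ≤ n → n ≤ N →
      discEnergy L ρ α lm ρ₁ K b ρ₃ δ u φ ψ w ξ Φ ϑ n
        ≤ discEnergy L ρ α lm ρ₁ K b ρ₃ δ u φ ψ w ξ Φ ϑ (n-1) := by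
  intro n hn hnN
  obtain ⟨hu, hφ, hψ, hw, hξ, hΦ, hϑ⟩ := hreg n hnN
  obtain ⟨hu₀, hφ₀, hψ₀, hw₀, hξ₀, hΦ₀, hϑ₀⟩ := hreg (n - 1) ((n.sub_le 1).trans hnN)
  obtain ⟨-, -, -, -, -, -, -, -, -, -, hΦ0, hΦL, -, -⟩ := hbc n hnN
  have hu_step x := (hup n hn hnN x).1
  have hφ_step x := (hup n hn hnN x).2.1
  have hw_step x := (hup n hn hnN x).2.2
  have hψ_step x : ψ n x = ψ (n - 1) x + Δt * ((ψ n x - ψ (n - 1) x) / Δt) := by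
    field_simp; ring
  have hΨ : ContDiff ℝ 1 fun y => (ψ n y - ψ (n - 1) y) / Δt := (hψ.sub hψ₀).div_const Δt
  have hφ'_step := deriv_eq_deriv_add_mul_deriv (hφ₀.differentiable one_ne_zero)
    (hΦ.differentiable one_ne_zero) hφ_step
  have hsq (f : ℝ → ℝ) : 0 ≤ ∫ x in (0:ℝ)..L, f x ^ 2 :=
    integral_nonneg hL.le fun x _ => sq_nonneg _
  have hcancel (c : ℝ) : Δt * (c / Δt) = c := mul_div_cancel₀ c hΔt.ne'
  unfold discEnergy
  linear_combination
    ρ / 2 * integral_sq_sub_integral_sq_le hL.le hξ.continuous hξ₀.continuous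
    + α / 2 * integral_deriv_sq_sub_integral_deriv_sq_le_of_eq_add hL.le hu₀ hξ hu_step
    + lm / 2 * integral_sq_sub_integral_sq_le_of_eq_add_add (c₁ := Δt) (c₂ := -Δt)
        (f := fun x => φ n x - u n x) (g := fun x => φ (n - 1) x - u (n - 1) x) hL.le
        (hφ.continuous.sub hu.continuous) hΦ.continuous hξ.continuous
        (fun x => by linear_combination hφ_step x - hu_step x)
    + ρ₁ / 2 * integral_sq_sub_integral_sq_le hL.le hΦ.continuous hΦ₀.continuous
    + K / 2 * integral_sq_sub_integral_sq_le_of_eq_add_add (c₁ := Δt) (c₂ := Δt)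
        (f := fun x => deriv (φ n) x + ψ n x) (g := fun x => deriv (φ (n - 1)) x + ψ (n - 1) x)
        hL.le
        ((hφ.continuous_deriv le_rfl).add hψ.continuous) (hΦ.continuous_deriv le_rfl)
        hΨ.continuous (fun x => by linear_combination hφ'_step x + hψ_step x)
    + b / 2 * integral_deriv_sq_sub_integral_deriv_sq_le_of_eq_add hL.le hψ₀ hΨ hψ_step
    + ρ₃ / 2 * integral_sq_sub_integral_sq_le hL.le hϑ.continuous hϑ₀.continuous
    + δ / 2 * integral_deriv_sq_sub_integral_deriv_sq_le_of_eq_add hL.le hw₀ hϑ hw_step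
    + Δt * (hA n hn hnN + hB n hn hnN + hC n hn hnN + hD n hn hnN)
    - Δt * β * integral_deriv_mul_add_integral_deriv_mul_eq_zero hϑ hΦ hΦ0 hΦL
    + Δt * μ * hsq (ξ n) + Δt * γ * hsq (Φ n) + Δt * κ * hsq (deriv (ϑ n))
    - (∫ x in (0:ℝ)..L, (ξ n x - ξ (n - 1) x) * ξ n x) * hcancel ρ
    - (∫ x in (0:ℝ)..L, (Φ n x - Φ (n - 1) x) * Φ n x) * hcancel ρ₁
    - (∫ x in (0:ℝ)..L, (ϑ n x - ϑ (n - 1) x) * ϑ n x) * hcancel ρ₃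

/-- discrete energy decay for the implicit Euler / finite element scheme. -/
theorem discrete_energy_decay
    {L Δt ρ α lm μ ρ₁ K γ b ρ₃ δ κ β : ℝ} {N : ℕ}
    (hL : 0 < L) (hΔt : 0 < Δt) (hN : 0 < N)
    (hρ : 0 < ρ) (hα : 0 < α) (hlm : 0 < lm) (hμ : 0 < μ)
    (hρ₁ : 0 < ρ₁) (hK : 0 < K) (hγ : 0 < γ) (hbb : 0 < b) (hρ₃ : 0 < ρ₃)
    (hδ : 0 < δ) (hκ : 0 < κ) (hβ : β ≠ 0)
    (u φ ψ w ξ Φ ϑ : ℕ → ℝ → ℝ)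
    (hreg : ∀ n ≤ N, ContDiff ℝ 1 (u n) ∧ ContDiff ℝ 1 (φ n) ∧ ContDiff ℝ 1 (ψ n)
      ∧ ContDiff ℝ 1 (w n) ∧ ContDiff ℝ 1 (ξ n) ∧ ContDiff ℝ 1 (Φ n)
      ∧ ContDiff ℝ 1 (ϑ n))
    (hbc : ∀ n ≤ N,
      u n 0 = 0 ∧ u n L = 0 ∧ φ n 0 = 0 ∧ φ n L = 0 ∧ ψ n 0 = 0 ∧ ψ n L = 0 ∧
      w n 0 = 0 ∧ w n L = 0 ∧ ξ n 0 = 0 ∧ ξ n L = 0 ∧ Φ n 0 = 0 ∧ Φ n L = 0 ∧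
      ϑ n 0 = 0 ∧ ϑ n L = 0)
    (hup : ∀ n : ℕ, 1 ≤ n → n ≤ N → ∀ x : ℝ,
      u n x = u (n-1) x + Δt * ξ n x ∧
      φ n x = φ (n-1) x + Δt * Φ n x ∧
      w n x = w (n-1) x + Δt * ϑ n x)
    (hA : ∀ n : ℕ, 1 ≤ n → n ≤ N →
      ρ / Δt * (∫ x in (0:ℝ)..L, (ξ n x - ξ (n-1) x) * ξ n x)
        + α * (∫ x in (0:ℝ)..L, deriv (u n) x * deriv (ξ n) x)
        - lm * (∫ x in (0:ℝ)..L, (φ n x - u n x) * ξ n x)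
        + μ * (∫ x in (0:ℝ)..L, (ξ n x)^2) = 0)
    (hB : ∀ n : ℕ, 1 ≤ n → n ≤ N →
      ρ₁ / Δt * (∫ x in (0:ℝ)..L, (Φ n x - Φ (n-1) x) * Φ n x)
        + K * (∫ x in (0:ℝ)..L, (deriv (φ n) x + ψ n x) * deriv (Φ n) x)
        + lm * (∫ x in (0:ℝ)..L, (φ n x - u n x) * Φ n x)
        + γ * (∫ x in (0:ℝ)..L, (Φ n x)^2)
        + β * (∫ x in (0:ℝ)..L, deriv (ϑ n) x * Φ n x) = 0)
    (hC : ∀ n : ℕ, 1 ≤ n → n ≤ N →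
      b * (∫ x in (0:ℝ)..L,
            deriv (ψ n) x * deriv (fun y => (ψ n y - ψ (n-1) y) / Δt) x)
        + K * (∫ x in (0:ℝ)..L,
            (deriv (φ n) x + ψ n x) * ((ψ n x - ψ (n-1) x) / Δt)) = 0)
    (hD : ∀ n : ℕ, 1 ≤ n → n ≤ N →
      ρ₃ / Δt * (∫ x in (0:ℝ)..L, (ϑ n x - ϑ (n-1) x) * ϑ n x)
        + δ * (∫ x in (0:ℝ)..L, deriv (w n) x * deriv (ϑ n) x)
        + β * (∫ x in (0:ℝ)..L, deriv (Φ n) x * ϑ n x)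
        + κ * (∫ x in (0:ℝ)..L, (deriv (ϑ n) x)^2) = 0) :
    ∀ n : ℕ, 1 ≤ n → n ≤ N →
      discEnergy L ρ α lm ρ₁ K b ρ₃ δ u φ ψ w ξ Φ ϑ n
        ≤ discEnergy L ρ α lm ρ₁ K b ρ₃ δ u φ ψ w ξ Φ ϑ (n-1) :=
  discrete_energy_decay_general hL hΔt hρ hα hlm hμ hρ₁ hK hγ hbb hρ₃ hδ hκ u φ ψ w ξ Φ ϑ hreg hbc
    hup hA hB hC hD
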